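/- arXiv:1212.1509 — 3 statements merged into one kernel-verified Lean document; each statement's English description precedes it below -/
import Mathlib

section
/- Let Γ be the group with presentation ⟨u, v, x, y, z | u(xy⁻¹)u⁻¹ = yz⁻¹, v(xy⁻¹)v⁻¹ = zx⁻¹⟩. Then the image of the element xy⁻¹ in Γ is not the identity element. -/
/-- The two relators of `Γ = ⟨u,v,x,y,z ∣ u(xy⁻¹)u⁻¹ = yz⁻¹, v(xy⁻¹)v⁻¹ = zx⁻¹⟩`,
with generators indexed by `Fin 5` as `u = 0`, `v = 1`, `x = 2`, `y = 3`, `z = 4`. -/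
def chiswellRels : Set (FreeGroup (Fin 5)) :=
  { FreeGroup.of 0 * (FreeGroup.of 2 * (FreeGroup.of 3)⁻¹) * (FreeGroup.of 0)⁻¹ *
      (FreeGroup.of 3 * (FreeGroup.of 4)⁻¹)⁻¹,
    FreeGroup.of 1 * (FreeGroup.of 2 * (FreeGroup.of 3)⁻¹) * (FreeGroup.of 1)⁻¹ *
      (FreeGroup.of 4 * (FreeGroup.of 2)⁻¹)⁻¹ }

/-- Test map to `ZMod 3`: `u,v,z ↦ 0`, `x ↦ 2`, `y ↦ 1`. -/
def chiswellF : Fin 5 → Multiplicative (ZMod 3) :=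
  ![1, 1, Multiplicative.ofAdd 2, Multiplicative.ofAdd 1, 1]

lemma chiswellF_rels : ∀ r ∈ chiswellRels, FreeGroup.lift chiswellF r = 1 := by
  intro r hr
  rcases hr with h | h <;> subst h <;> simp [chiswellF] <;> decide

/-- In `Γ`, the image of `xy⁻¹` is non-trivial. -/
theorem chiswell_xyinv_ne_one :
    let X : PresentedGroup chiswellRels := PresentedGroup.of 2
    let Y : PresentedGroup chiswellRels := PresentedGroup.of 3
    X * Y⁻¹ ≠ 1 := by
  intro X Y h
  have := congrArg (PresentedGroup.toGroup chiswellF_rels) h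
  simp [X, Y, PresentedGroup.toGroup.of, chiswellF] at this
  exact absurd this (by decide)
end

section
/- Let Γ be the group with presentation ⟨u, v, x, y, z | u(xy⁻¹)u⁻¹ = yz⁻¹, v(xy⁻¹)v⁻¹ = zx⁻¹⟩. Then Γ contains a non-trivial generalised torsion element; namely, the image g of xy⁻¹ in Γ satisfies g ≠ 1 and there exist h₁, h₂, h₃ ∈ Γ with (h₁⁻¹gh₁)(h₂⁻¹gh₂)(h₃⁻¹gh₃) = 1. -/
open PresentedGroup

theorem exists_conj_mul_conj_mul_conj_eq_one {G : Type*} [Group G] {u v x y z : G}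
    (hu : u * (x * y⁻¹) * u⁻¹ = y * z⁻¹) (hv : v * (x * y⁻¹) * v⁻¹ = z * x⁻¹) :
    ∃ h₁ h₂ h₃ : G, (h₁⁻¹ * (x * y⁻¹) * h₁) * (h₂⁻¹ * (x * y⁻¹) * h₂) *
      (h₃⁻¹ * (x * y⁻¹) * h₃) = 1 := by
  refine ⟨1, u⁻¹, v⁻¹, ?_⟩
  calc (1⁻¹ * (x * y⁻¹) * 1) * (u⁻¹⁻¹ * (x * y⁻¹) * u⁻¹) * (v⁻¹⁻¹ * (x * y⁻¹) * v⁻¹)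
      = x * y⁻¹ * (u * (x * y⁻¹) * u⁻¹) * (v * (x * y⁻¹) * v⁻¹) := by group
    _ = x * y⁻¹ * (y * z⁻¹) * (z * x⁻¹) := by rw [hu, hv]
    _ = 1 := by group

local notation "Γ" => PresentedGroup chiswellRels

theorem chiswell_conj_u :
    (of 0 : Γ) * (of 2 * (of 3)⁻¹) * (of 0)⁻¹ = of 3 * (of 4)⁻¹ :=
  mul_inv_eq_one.mp (one_of_mem (Set.mem_insert _ _))

theorem chiswell_conj_v :
    (of 1 : Γ) * (of 2 * (of 3)⁻¹) * (of 1)⁻¹ = of 4 * (of 2)⁻¹ :=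
  mul_inv_eq_one.mp (one_of_mem (Set.mem_insert_of_mem _ rfl))

def chiswellToZMod3 : Γ →* Multiplicative (ZMod 3) :=
  toGroup (f := fun i => Multiplicative.ofAdd (![(0 : ZMod 3), 0, 1, 0, 2] i)) <| by
    rintro r (rfl | rfl) <;> decide

theorem chiswellToZMod3_of_two_mul_inv_of_three :
    chiswellToZMod3 (of 2 * (of 3)⁻¹) = Multiplicative.ofAdd 1 := by
  simp only [chiswellToZMod3, map_mul, map_inv, toGroup.of]
  decide

theorem chiswell_of_two_mul_inv_of_three_ne_one : (of 2 * (of 3)⁻¹ : Γ) ≠ 1 := fun h =>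
  absurd chiswellToZMod3_of_two_mul_inv_of_three (by rw [h, map_one]; decide)

/-- The image `g` of `xy⁻¹` in `Γ` is a non-trivial generalised torsion element:
`g ≠ 1` and some product of three conjugates of `g` is trivial. -/
theorem chiswell_has_nontrivial_generalised_torsion :
    let X : PresentedGroup chiswellRels := PresentedGroup.of 2
    let Y : PresentedGroup chiswellRels := PresentedGroup.of 3
    let g := X * Y⁻¹
    g ≠ 1 ∧ ∃ h₁ h₂ h₃ : PresentedGroup chiswellRels,
      (h₁⁻¹ * g * h₁) * (h₂⁻¹ * g * h₂) * (h₃⁻¹ * g * h₃) = 1 :=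
  ⟨chiswell_of_two_mul_inv_of_three_ne_one,
    exists_conj_mul_conj_mul_conj_eq_one chiswell_conj_u chiswell_conj_v⟩
end

section
/- Let Γ be the group with presentation ⟨u, v, x, y, z | u(xy⁻¹)u⁻¹ = yz⁻¹, v(xy⁻¹)v⁻¹ = zx⁻¹⟩. Then Γ is not orderable: there is no linear order ≤ on Γ such that a ≤ b implies g·a·h ≤ g·b·h for all g, h ∈ Γ. -/
/-- Images of the generators in `Equiv.Perm (Fin 4)`: `u ↦ (234)`, `v ↦ (243)`,
`x ↦ (12)(34)`, `y ↦ 1`, `z ↦ (13)(24)` (1-indexed cycle notation). -/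
private def chisF : Fin 5 → Equiv.Perm (Fin 4)
  | 0 => c[1, 2, 3]
  | 1 => c[1, 3, 2]
  | 2 => c[0, 1] * c[2, 3]
  | 3 => 1
  | 4 => c[0, 2] * c[1, 3]

private lemma chis_rels_hold : ∀ r ∈ chiswellRels, FreeGroup.lift chisF r = 1 := by
  intro r hr
  rcases hr with h | h <;> subst h <;>
    simp only [map_mul, map_inv, FreeGroup.lift_apply_of] <;> decide

private def chisφ : PresentedGroup chiswellRels →* Equiv.Perm (Fin 4) :=
  PresentedGroup.toGroup chis_rels_hold

private def gg (i : Fin 5) : PresentedGroup chiswellRels := PresentedGroup.of i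

private lemma rel_eq_one {r : FreeGroup (Fin 5)} (hr : r ∈ chiswellRels) :
    (QuotientGroup.mk r : PresentedGroup chiswellRels) = 1 :=
  (QuotientGroup.eq_one_iff r).mpr (Subgroup.subset_normalClosure hr)

private lemma key1 : gg 0 * (gg 2 * (gg 3)⁻¹) * (gg 0)⁻¹ = gg 3 * (gg 4)⁻¹ := by
  have h := rel_eq_one (Set.mem_insert _ _)
  simp only [QuotientGroup.mk_mul, QuotientGroup.mk_inv] at h
  exact mul_inv_eq_one.mp h

private lemma key2 : gg 1 * (gg 2 * (gg 3)⁻¹) * (gg 1)⁻¹ = gg 4 * (gg 2)⁻¹ := by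
  have h := rel_eq_one (Set.mem_insert_of_mem _ rfl)
  simp only [QuotientGroup.mk_mul, QuotientGroup.mk_inv] at h
  exact mul_inv_eq_one.mp h

private lemma A_ne_one : gg 2 * (gg 3)⁻¹ ≠ 1 := by
  intro h
  have : chisφ (gg 2 * (gg 3)⁻¹) = 1 := by rw [h]; simp
  rw [map_mul, map_inv] at this
  have h2 : chisφ (gg 2) = chisF 2 := PresentedGroup.toGroup.of chis_rels_hold
  have h3 : chisφ (gg 3) = chisF 3 := PresentedGroup.toGroup.of chis_rels_hold
  rw [h2, h3] at this
  revert this; decide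

/-- `Γ` is not (bi-)orderable: there is no bi-invariant linear order on `Γ`. -/
theorem chiswell_group_not_orderable :
    ¬ ∃ lo : LinearOrder (PresentedGroup chiswellRels),
        ∀ a b g h : PresentedGroup chiswellRels,
          lo.le a b → lo.le (g * a * h) (g * b * h) := by
  rintro ⟨lo, hmono⟩
  set A := gg 2 * (gg 3)⁻¹ with hA
  set B := gg 3 * (gg 4)⁻¹ with hB
  set C := gg 4 * (gg 2)⁻¹ with hC
  have hABC : A * B * C = 1 := by rw [hA, hB, hC]; group
  have hconj1 : gg 0 * A * (gg 0)⁻¹ = B := key1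
  have hconj2 : gg 1 * A * (gg 1)⁻¹ = C := key2
  rcases lo.le_total 1 A with hpos | hneg
  · have hBpos : lo.le 1 B := by
      have := hmono 1 A (gg 0) (gg 0)⁻¹ hpos
      rwa [mul_one, mul_inv_cancel, hconj1] at this
    have hCpos : lo.le 1 C := by
      have := hmono 1 A (gg 1) (gg 1)⁻¹ hpos
      rwa [mul_one, mul_inv_cancel, hconj2] at this
    have h1 : lo.le A (A * B) := by
      have := hmono 1 B A 1 hBpos
      rwa [mul_one, mul_one, mul_one] at this
    have h2 : lo.le (A * B) 1 := by
      have := hmono 1 C (A * B) 1 hCpos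
      rwa [mul_one, mul_one, mul_one, hABC] at this
    exact A_ne_one (lo.le_antisymm A 1 (lo.le_trans _ _ _ h1 h2) hpos)
  · have hBneg : lo.le B 1 := by
      have := hmono A 1 (gg 0) (gg 0)⁻¹ hneg
      rwa [mul_one, mul_inv_cancel, hconj1] at this
    have hCneg : lo.le C 1 := by
      have := hmono A 1 (gg 1) (gg 1)⁻¹ hneg
      rwa [mul_one, mul_inv_cancel, hconj2] at this
    have h1 : lo.le (A * B) A := by
      have := hmono B 1 A 1 hBneg
      rwa [mul_one, mul_one, mul_one] at this
    have h2 : lo.le 1 (A * B) := by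
      have := hmono C 1 (A * B) 1 hCneg
      rwa [mul_one, mul_one, mul_one, hABC] at this
    exact A_ne_one (lo.le_antisymm A 1 hneg (lo.le_trans _ _ _ h2 h1))
end
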